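/- arXiv:2404.09072 — 2 statements merged into one kernel-verified Lean document; each statement's English description precedes it below -/
import Mathlib

section
/- Let T = (T_1,…,T_n) be operators on a Hilbert space H, {b_α}_{α∈F_n^+} strictly positive weights with b_{g_0}=1 and sup_α b_α/b_{g_iα} < ∞, W = (W_1,…,W_n) the associated weighted left creation operators on F²(H_n), and D a positive operator on H such that the series ∑_{α∈F_n^+} b_α T_α D T_α* converges in the weak operator topology. Define Ṽ: H → F²(H_n) ⊗ cl(D·H) by Ṽh := ∑_α √b_α e_α ⊗ D^{1/2} T_α* h. Then Ṽ is bounded, satisfies Ṽ T_i* = (W_i* ⊗ I) Ṽ for every i, and Ṽ is an isometry if and only if ∑_α b_α T_α D T_α* = I_H. -/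
/-!
The `α`-th coordinate of `Ṽ h` is `A_α h` with `A_α = √b_α R T_α*`, and
`⟪A_α x, A_α y⟫ = b_α ⟪T_α* x, D T_α* y⟫`, so the hypothesis says that the partial sums of
`∑_α ⟪A_α x, A_α y⟫`, taken over words of bounded length, tend to `⟪x, S y⟫`. For `x = y` the
terms are nonnegative, so the series converges unconditionally: `Ṽ h ∈ ℓ²` and
`‖Ṽ h‖² = re ⟪h, S h⟫ ≤ ‖S‖ ‖h‖²`. Inner products in `ℓ²` are unconditionally summable, hence
`Ṽ* Ṽ = S`, and `Ṽ` is an isometry iff `Ṽ* Ṽ = 1`. The intertwining relation comes from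
`T_{g_i α}* = T_α* T_i*` and `√(b_α / b_{g_i α}) √b_{g_i α} = √b_α`.
-/
open scoped ENNReal Topology

noncomputable section

/-- Words over the alphabet `Fin n`: elements of the free monoid `F_n^+`. -/
abbrev Word (n : ℕ) := List (Fin n)

/-- The operator `T_α = T_{i₁} ⋯ T_{i_k}` for a word `α = g_{i₁}⋯g_{i_k}` (`T_{g₀} = I`). -/
def opWord {n : ℕ} {H : Type*} [NormedAddCommGroup H] [InnerProductSpace ℂ H]
    (T : Fin n → (H →L[ℂ] H)) (α : Word n) : H →L[ℂ] H := (α.map T).prod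

open Filter ContinuousLinearMap
open scoped InnerProductSpace

namespace List

variable {α : Type*} [Fintype α]

theorem _root_.HasSum.tendsto_sum_range_sum_ofFn {M : Type*} [AddCommMonoid M]
    [TopologicalSpace M] [ContinuousAdd M] [RegularSpace M] {g : List α → M} {a : M}
    (h : HasSum g a) :
    Tendsto (fun N => ∑ p ∈ Finset.range N, ∑ f : Fin p → α, g (ofFn f)) atTop (𝓝 a) :=
  ((equivSigmaTuple.symm.hasSum_iff.mpr h).sigma fun _ => hasSum_fintype _).tendsto_sum_nat

theorem hasSum_of_nonneg_of_tendsto_sum_range_sum_ofFn {g : List α → ℝ} (hg : ∀ w, 0 ≤ g w)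
    {a : ℝ}
    (h : Tendsto (fun N => ∑ p ∈ Finset.range N, ∑ f : Fin p → α, g (ofFn f)) atTop (𝓝 a)) :
    HasSum g a := by
  have hlen : HasSum (fun p => ∑ f : Fin p → α, g (ofFn f)) a :=
    (hasSum_iff_tendsto_nat_of_nonneg (fun _ => Finset.sum_nonneg fun _ _ => hg _) a).mpr h
  have hfib (p : ℕ) : HasSum (fun f : Fin p → α => g (ofFn f)) (∑ f : Fin p → α, g (ofFn f)) :=
    hasSum_fintype _
  have hsum : Summable (g ∘ equivSigmaTuple.symm) :=
    (summable_sigma_of_nonneg fun _ => hg _).mpr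
      ⟨fun p => (hfib p).summable, hlen.summable.congr fun p => (hfib p).tsum_eq.symm⟩
  exact equivSigmaTuple.symm.hasSum_iff.mp (hlen.sigma_of_hasSum hfib hsum)

end List

section lpTwo

variable {𝕜 ι H E : Type*} [RCLike 𝕜] [NormedAddCommGroup H] [InnerProductSpace 𝕜 H]

theorem exists_clm_lp_two_of_hasSum_norm_sq [NormedAddCommGroup E] [NormedSpace 𝕜 E]
    (A : ι → H →L[𝕜] E) (S : H →L[𝕜] H)
    (hA : ∀ h, HasSum (fun i => ‖A i h‖ ^ 2) (RCLike.re ⟪h, S h⟫_𝕜)) :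
    ∃ V : H →L[𝕜] lp (fun _ : ι => E) 2, ∀ h i, V h i = A i h := by
  have two : (2 : ℝ≥0∞).toReal = (2 : ℕ) := by norm_num
  have hmem (h : H) : Memℓp (fun i => A i h) 2 :=
    memℓp_gen (by simpa only [two, Real.rpow_natCast] using (hA h).summable)
  let L : H →ₗ[𝕜] lp (fun _ : ι => E) 2 :=
    { toFun := fun h => ⟨fun i => A i h, hmem h⟩
      map_add' := fun x y => Subtype.ext <| funext fun i => map_add (A i) x y
      map_smul' := fun c x => Subtype.ext <| funext fun i => map_smul (A i) c x }
  have hbound (h : H) : ‖L h‖ ≤ √‖S‖ * ‖h‖ := by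
    refine lp.norm_le_of_tsum_le (by norm_num) (by positivity) ?_
    simp only [two, Real.rpow_natCast]
    calc ∑' i, ‖A i h‖ ^ 2 = RCLike.re ⟪h, S h⟫_𝕜 := (hA h).tsum_eq
      _ ≤ ‖h‖ * (‖S‖ * ‖h‖) :=
        (RCLike.re_le_norm _).trans <| (norm_inner_le_norm _ _).trans <|
          mul_le_mul_of_nonneg_left (S.le_opNorm h) (norm_nonneg _)
      _ = (√‖S‖ * ‖h‖) ^ 2 := by rw [mul_pow, Real.sq_sqrt (norm_nonneg _)]; ring
  exact ⟨L.mkContinuous _ hbound, fun _ _ => rfl⟩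

theorem adjoint_comp_self_eq_of_tendsto_sum_range_sum_ofFn {α : Type*} [Fintype α]
    [NormedAddCommGroup E] [InnerProductSpace 𝕜 E] [CompleteSpace H] [CompleteSpace E]
    (V : H →L[𝕜] lp (fun _ : List α => E) 2) (S : H →L[𝕜] H)
    (hV : ∀ x y, Tendsto (fun N => ∑ p ∈ Finset.range N, ∑ f : Fin p → α,
      ⟪V x (List.ofFn f), V y (List.ofFn f)⟫_𝕜) atTop (𝓝 ⟪x, S y⟫_𝕜)) :
    adjoint V ∘L V = S := by
  ext x
  refine ext_inner_left 𝕜 fun y => ?_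
  rw [comp_apply, adjoint_inner_right]
  exact tendsto_nhds_unique (lp.hasSum_inner (V y) (V x)).tendsto_sum_range_sum_ofFn (hV y x)

end lpTwo

theorem ofReal_sqrt_div_smul_ofReal_sqrt_smul {E : Type*} [AddCommGroup E] [Module ℂ E]
    {s t : ℝ} (hs : 0 ≤ s) (ht : 0 < t) (x : E) :
    (√(s / t) : ℂ) • (√t : ℂ) • x = (√s : ℂ) • x := by
  rw [smul_smul, ← Complex.ofReal_mul, ← Real.sqrt_mul (div_nonneg hs ht.le),
    div_mul_cancel₀ _ ht.ne']

section WeightedDilation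

variable {n : ℕ} {H : Type*} [NormedAddCommGroup H] [InnerProductSpace ℂ H]

theorem opWord_cons (T : Fin n → (H →L[ℂ] H)) (i : Fin n) (α : Word n) :
    opWord T (i :: α) = T i ∘L opWord T α :=
  List.prod_cons

variable [CompleteSpace H]

theorem inner_ofReal_sqrt_smul_apply {R D : H →L[ℂ] H} (hRsa : adjoint R = R) (hR2 : R * R = D)
    {t : ℝ} (ht : 0 ≤ t) (u v : H) :
    ⟪(√t : ℂ) • R u, (√t : ℂ) • R v⟫_ℂ = t * ⟪u, D v⟫_ℂ := by
  rw [inner_smul_left, inner_smul_right, ← mul_assoc, Complex.conj_ofReal, ← Complex.ofReal_mul,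
    Real.mul_self_sqrt ht, ← hR2, mul_apply_eq_comp, ← adjoint_inner_left R (R v) u, hRsa]

end WeightedDilation

theorem stmt14_general {n : ℕ} {H : Type} [NormedAddCommGroup H] [InnerProductSpace ℂ H]
    [CompleteSpace H]
    (b : Word n → ℝ) (hbpos : ∀ α, 0 < b α)
    (T : Fin n → (H →L[ℂ] H))
    (D R : H →L[ℂ] H)
    (hRsa : ContinuousLinearMap.adjoint R = R)
    (hR2 : R * R = D)
    (S : H →L[ℂ] H)
    (hS : ∀ x y : H, Filter.Tendsto (fun N : ℕ =>
        ∑ p ∈ Finset.range (N + 1), ∑ f : Fin p → Fin n,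
          (b (List.ofFn f) : ℂ) *
            (inner ℂ (ContinuousLinearMap.adjoint (opWord T (List.ofFn f)) x)
              (D (ContinuousLinearMap.adjoint (opWord T (List.ofFn f)) y)) : ℂ))
      Filter.atTop (𝓝 (inner ℂ x (S y) : ℂ))) :
    ∃ V : H →L[ℂ] (lp (fun _ : Word n => H) 2),
      (∀ (h : H) (α : Word n),
        V h α = (Real.sqrt (b α) : ℂ) • R (ContinuousLinearMap.adjoint (opWord T α) h)) ∧
      (∀ (i : Fin n) (h : H) (α : Word n),
        V (ContinuousLinearMap.adjoint (T i) h) α =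
          (Real.sqrt (b α / b (i :: α)) : ℂ) • (V h (i :: α))) ∧
      ((∀ h : H, ‖V h‖ = ‖h‖) ↔ S = 1) := by
  set A : Word n → H →L[ℂ] H := fun α => (√(b α) : ℂ) • R ∘L adjoint (opWord T α)
  have hpartial : ∀ x y, Tendsto (fun N => ∑ p ∈ Finset.range N, ∑ f : Fin p → Fin n,
      ⟪A (List.ofFn f) x, A (List.ofFn f) y⟫_ℂ) atTop (𝓝 ⟪x, S y⟫_ℂ) := fun x y => by
    refine (tendsto_add_atTop_iff_nat 1).mp ?_
    simpa only [A, smul_apply, comp_apply, inner_ofReal_sqrt_smul_apply hRsa hR2 (hbpos _).le]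
      using hS x y
  have hnorm (h : H) : HasSum (fun α => ‖A α h‖ ^ 2) (RCLike.re ⟪h, S h⟫_ℂ) := by
    refine List.hasSum_of_nonneg_of_tendsto_sum_range_sum_ofFn (fun _ => sq_nonneg _) ?_
    simpa only [Function.comp_def, ← RCLike.re_to_complex, map_sum, inner_self_eq_norm_sq]
      using (Complex.continuous_re.tendsto _).comp (hpartial h h)
  obtain ⟨V, hV⟩ := exists_clm_lp_two_of_hasSum_norm_sq A S hnorm
  have hVV : adjoint V ∘L V = S :=
    adjoint_comp_self_eq_of_tendsto_sum_range_sum_ofFn V S (by simpa only [hV] using hpartial)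
  refine ⟨V, hV, fun i h α => ?_, by rw [norm_map_iff_adjoint_comp_self, hVV]⟩
  simp only [hV, A, smul_apply, comp_apply, opWord_cons, adjoint_comp,
    ofReal_sqrt_div_smul_ofReal_sqrt_smul (hbpos α).le (hbpos (i :: α))]

/-- let `T` be a tuple of operators on `H`, `b` strictly positive weights with
`b_{g₀}=1` and `sup_α b_α/b_{g_iα} < ∞`, and `D` a positive operator (with positive square
root `R`, `R² = D`) such that `∑_α b_α T_α D T_α*` converges in the weak operator topology
to an operator `S`.  Then the map `Ṽ h := ∑_α √b_α e_α ⊗ D^{1/2} T_α* h` (realized here as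
an `ℓ²`-family over words, i.e. an element of `F²(H_n) ⊗ H`) is a bounded operator, it
satisfies `Ṽ T_i* = (W_i* ⊗ I) Ṽ` (expressed coordinatewise, since
`(W_i*⊗I)ξ)_α = √(b_α/b_{g_iα}) ξ_{g_iα}`), and `Ṽ` is an isometry iff `S = I`. -/
theorem stmt14 {n : ℕ} {H : Type} [NormedAddCommGroup H] [InnerProductSpace ℂ H]
    [CompleteSpace H]
    (b : Word n → ℝ) (hbpos : ∀ α, 0 < b α) (hb0 : b [] = 1)
    (hsup : ∀ i : Fin n, ∃ C : ℝ, ∀ α, b α / b (i :: α) ≤ C)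
    (T : Fin n → (H →L[ℂ] H))
    (D R : H →L[ℂ] H)
    (hDpos : ∀ x : H, 0 ≤ (inner ℂ x (D x) : ℂ).re)
    (hDsa : ContinuousLinearMap.adjoint D = D)
    (hRsa : ContinuousLinearMap.adjoint R = R)
    (hRpos : ∀ x : H, 0 ≤ (inner ℂ x (R x) : ℂ).re)
    (hR2 : R * R = D)
    (S : H →L[ℂ] H)
    (hS : ∀ x y : H, Filter.Tendsto (fun N : ℕ =>
        ∑ p ∈ Finset.range (N + 1), ∑ f : Fin p → Fin n,
          (b (List.ofFn f) : ℂ) *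
            (inner ℂ (ContinuousLinearMap.adjoint (opWord T (List.ofFn f)) x)
              (D (ContinuousLinearMap.adjoint (opWord T (List.ofFn f)) y)) : ℂ))
      Filter.atTop (𝓝 (inner ℂ x (S y) : ℂ))) :
    ∃ V : H →L[ℂ] (lp (fun _ : Word n => H) 2),
      (∀ (h : H) (α : Word n),
        V h α = (Real.sqrt (b α) : ℂ) • R (ContinuousLinearMap.adjoint (opWord T α) h)) ∧
      (∀ (i : Fin n) (h : H) (α : Word n),
        V (ContinuousLinearMap.adjoint (T i) h) α =
          (Real.sqrt (b α / b (i :: α)) : ℂ) • (V h (i :: α))) ∧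
      ((∀ h : H, ‖V h‖ = ‖h‖) ↔ S = 1) :=
  stmt14_general b hbpos T D R hRsa hR2 S hS
end
end

section
/- Let V: H → F²(H_n) ⊗ E be a bounded operator satisfying V T_i* = (W_i* ⊗ I_E) V for all i, where W are the weighted left creation operators for weights {b_α} with b_{g_0}=1. Write Vh = ∑_α e_α ⊗ Θ_{(α)} h for bounded operators Θ_{(α)}: H → E. Then Θ_{(γ)} = √b_γ · Θ_{(g_0)} T_γ* for every word γ, and consequently the series ∑_{α∈F_n^+} b_α T_α Θ_{(g_0)}* Θ_{(g_0)} T_α* converges in the weak operator topology with sum ≤ ‖V‖² I. -/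
open scoped ENNReal

noncomputable section

/-- let `V : H → F²(H_n) ⊗ E` (realized as an `ℓ²`-family over words with
values in `E`) be a bounded operator with `V T_i* = (W_i* ⊗ I_E) V` for all `i`, expressed
coordinatewise via `(W_i*⊗I)ξ)_β = √(b_β/b_{g_iβ}) ξ_{g_iβ}`, where `b` are positive
weights with `b_{g₀}=1`.  Writing `Θ_{(α)} h := (V h)_α`, one gets
`Θ_{(γ)} = √b_γ Θ_{(g₀)} T_γ*` for every word `γ`, and consequently the series
`∑_α b_α T_α Θ_{(g₀)}* Θ_{(g₀)} T_α*` converges in the weak operator topology with sum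
`≤ ‖V‖² I` (expressed via the quadratic forms `∑_α b_α ‖Θ_{(g₀)} T_α* h‖² ≤ ‖V‖² ‖h‖²`). -/
theorem stmt15 {n : ℕ} {H E : Type} [NormedAddCommGroup H] [InnerProductSpace ℂ H]
    [CompleteSpace H] [NormedAddCommGroup E] [InnerProductSpace ℂ E] [CompleteSpace E]
    (b : Word n → ℝ) (hbpos : ∀ α, 0 < b α) (hb0 : b [] = 1)
    (T : Fin n → (H →L[ℂ] H))
    (V : H →L[ℂ] lp (fun _ : Word n => E) 2)
    (hV : ∀ (i : Fin n) (h : H) (β : Word n),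
      V (ContinuousLinearMap.adjoint (T i) h) β =
        (Real.sqrt (b β / b (i :: β)) : ℂ) • (V h (i :: β))) :
    (∀ (γ : Word n) (h : H),
      V h γ = (Real.sqrt (b γ) : ℂ) •
        (V (ContinuousLinearMap.adjoint (opWord T γ) h) ([] : Word n))) ∧
    (∀ h : H,
      Summable (fun α : Word n =>
        b α * ‖V (ContinuousLinearMap.adjoint (opWord T α) h) ([] : Word n)‖ ^ 2) ∧
      ∑' α : Word n,
          b α * ‖V (ContinuousLinearMap.adjoint (opWord T α) h) ([] : Word n)‖ ^ 2
        ≤ ‖V‖ ^ 2 * ‖h‖ ^ 2) := by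
  have key : ∀ (γ : Word n) (h : H),
      V h γ = (Real.sqrt (b γ) : ℂ) •
        (V (ContinuousLinearMap.adjoint (opWord T γ) h) ([] : Word n)) := by
    intro γ
    induction γ with
    | nil =>
      intro h
      simp [opWord, hb0, ContinuousLinearMap.one_def, ContinuousLinearMap.adjoint_id]
    | cons i β ih =>
      intro h
      have hc : (Real.sqrt (b β / b (i :: β)) : ℂ) ≠ 0 := by
        simp only [ne_eq, Complex.ofReal_eq_zero]
        exact Real.sqrt_ne_zero'.2 (div_pos (hbpos β) (hbpos (i :: β)))
      have hadj : ContinuousLinearMap.adjoint (opWord T (i :: β)) h =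
          ContinuousLinearMap.adjoint (opWord T β)
            (ContinuousLinearMap.adjoint (T i) h) := by
        have : opWord T (i :: β) = (T i).comp (opWord T β) := by
          simp [opWord, List.map_cons, List.prod_cons]
          rfl
        rw [this, ContinuousLinearMap.adjoint_comp]
        rfl
      have h1 := hV i h β
      have h2 := ih (ContinuousLinearMap.adjoint (T i) h)
      -- multiply the goal by the nonzero scalar c
      have hmul : (Real.sqrt (b β / b (i :: β)) : ℂ) * (Real.sqrt (b (i :: β)) : ℂ)
          = (Real.sqrt (b β) : ℂ) := by
        rw [← Complex.ofReal_mul, ← Real.sqrt_mul (le_of_lt (div_pos (hbpos β) (hbpos (i :: β))))]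
        rw [div_mul_cancel₀ _ (ne_of_gt (hbpos (i :: β)))]
      apply smul_right_injective _ hc
      beta_reduce
      rw [smul_smul, hmul, ← h1, h2, hadj]
  refine ⟨key, fun h => ?_⟩
  have heq : ∀ α : Word n,
      b α * ‖V (ContinuousLinearMap.adjoint (opWord T α) h) ([] : Word n)‖ ^ 2
      = ‖V h α‖ ^ 2 := by
    intro α
    rw [key α h, norm_smul]
    have : ‖(Real.sqrt (b α) : ℂ)‖ = Real.sqrt (b α) := by
      rw [Complex.norm_real, Real.norm_eq_abs, abs_of_nonneg (Real.sqrt_nonneg _)]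
    rw [this, mul_pow, Real.sq_sqrt (le_of_lt (hbpos α))]
  have hmem : Memℓp (fun α => V h α) 2 := (V h).2
  have hsum : Summable (fun α : Word n => ‖V h α‖ ^ (2 : ℝ≥0∞).toReal) :=
    hmem.summable (by norm_num)
  have hsum2 : Summable (fun α : Word n => ‖V h α‖ ^ 2) := by
    convert hsum using 2 with α
    rw [ENNReal.toReal_ofNat, ← Real.rpow_natCast]
    norm_num
  constructor
  · exact hsum2.congr (fun α => (heq α).symm)
  · have htsum : (∑' α : Word n,
        b α * ‖V (ContinuousLinearMap.adjoint (opWord T α) h) ([] : Word n)‖ ^ 2)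
        = ∑' α : Word n, ‖V h α‖ ^ 2 := tsum_congr heq
    rw [htsum]
    have hnorm : ‖V h‖ ^ (2 : ℝ≥0∞).toReal
        = ∑' α : Word n, ‖V h α‖ ^ (2 : ℝ≥0∞).toReal :=
      lp.norm_rpow_eq_tsum (by norm_num) (V h)
    have hnorm2 : ‖V h‖ ^ 2 = ∑' α : Word n, ‖V h α‖ ^ 2 := by
      have := hnorm
      simp only [ENNReal.toReal_ofNat] at this
      rw [← Real.rpow_natCast ‖V h‖ 2]
      push_cast
      rw [this]
      refine tsum_congr (fun α => ?_)
      rw [← Real.rpow_natCast]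
      norm_num
    rw [← hnorm2]
    calc ‖V h‖ ^ 2 ≤ (‖V‖ * ‖h‖) ^ 2 := by
          apply pow_le_pow_left₀ (norm_nonneg _) (V.le_opNorm h)
      _ = ‖V‖ ^ 2 * ‖h‖ ^ 2 := mul_pow _ _ _
end
end
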